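/- Fix a real number r with r > 1, and let D = {(p,q) : 0 < p ≤ 1, 0 < q ≤ 1, p·q < 1/r}. Define E on D by E(p,q) = log( 2p(1−q) / ( √((1−p)² + 4p(1−q)(1/r − p·q)) − (1−p) ) ) when q < 1, and E(p,1) = log( (1−p)/(1/r − p) ). Then the infimum of E over D equals (1/2)·log r. -/

import Mathlib

/-!
Write `t = √(1/r) ≤ 1`. Clearing the square root, the argument of the logarithm is at least
`1/t = √r` everywhere on the domain; for `q < 1` this reduces to
`(1/r)(1 - p) - p q (1 - 1/r) ≤ t (1 - p)`, and for `q = 1` to `(1 - t)(t - p) ≥ 0`.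
Along `p = 1` the threshold is `½ log ((1 - q)/(1/r - q))`, which tends to `½ log r` as `q → 0⁺`.
-/

open Real Filter Topology

/-- The paper's threshold `E(p, q)` for the constant risk profile `r`. -/
noncomputable def riskThreshold (r p q : ℝ) : ℝ :=
  if q < 1 then
    log (2 * p * (1 - q) / (√((1 - p) ^ 2 + 4 * p * (1 - q) * (1 / r - p * q)) - (1 - p)))
  else
    log ((1 - p) / (1 / r - p))

lemma inv_sqrt_le_div_sqrt_sub {s p q : ℝ} (hs1 : s ≤ 1) (hp : 0 < p) (hp1 : p ≤ 1)
    (hq : 0 ≤ q) (hq1 : q < 1) (hpq : p * q < s) :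
    1 / √s ≤ 2 * p * (1 - q) / (√((1 - p) ^ 2 + 4 * p * (1 - q) * (s - p * q)) - (1 - p)) := by
  have hs : 0 < s := (mul_nonneg hp.le hq).trans_lt hpq
  set t := √s
  have ht : 0 < t := sqrt_pos.2 hs
  have hts : t ^ 2 = s := sq_sqrt hs.le
  have hw : 0 < p * (1 - q) := mul_pos hp (by linarith)
  have hst : s ≤ t := by nlinarith [sqrt_le_one.2 hs1]
  have hreduced : s - p * q ≤ t * (1 - p) + s * (p * (1 - q)) := by
    nlinarith [mul_nonneg (mul_nonneg hp.le hq) (sub_nonneg.2 hs1)]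
  have hsqrt :
      √((1 - p) ^ 2 + 4 * p * (1 - q) * (s - p * q)) ≤ (1 - p) + 2 * t * (p * (1 - q)) := by
    have h4w := mul_le_mul_of_nonneg_left hreduced (by positivity : (0 : ℝ) ≤ 4 * (p * (1 - q)))
    rw [sqrt_le_left (by positivity)]
    rw [← hts] at h4w ⊢
    nlinarith [h4w]
  have hden : 0 < √((1 - p) ^ 2 + 4 * p * (1 - q) * (s - p * q)) - (1 - p) := by
    rw [sub_pos, lt_sqrt (by linarith)]
    nlinarith
  rw [div_le_div_iff₀ ht hden]
  linarith

lemma inv_sqrt_le_div_sub {s p : ℝ} (hs1 : s ≤ 1) (hp : 0 ≤ p) (hps : p < s) :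
    1 / √s ≤ (1 - p) / (s - p) := by
  set t := √s
  have ht : 0 < t := sqrt_pos.2 (hp.trans_lt hps)
  have hts : t ^ 2 = s := sq_sqrt (hp.trans hps.le)
  have ht1 : t ≤ 1 := sqrt_le_one.2 hs1
  rw [div_le_div_iff₀ ht (by linarith)]
  nlinarith [mul_nonneg (sub_nonneg.2 ht1) (by nlinarith : (0 : ℝ) ≤ t - p)]

lemma half_log_le_riskThreshold {r p q : ℝ} (hr : 1 ≤ r) (hp : 0 < p) (hp1 : p ≤ 1)
    (hq : 0 < q) (hq1 : q ≤ 1) (hpq : p * q < 1 / r) :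
    1 / 2 * log r ≤ riskThreshold r p q := by
  have hs1 : 1 / r ≤ 1 := div_le_one_of_le₀ hr (by linarith)
  have hlog : 1 / 2 * log r = log (1 / √(1 / r)) := by
    rw [one_div r, sqrt_inv, one_div (√r)⁻¹, inv_inv, log_sqrt (by linarith)]
    ring
  rw [hlog, riskThreshold]
  split_ifs with hq1'
  · exact log_le_log (by positivity) (inv_sqrt_le_div_sqrt_sub hs1 hp hp1 hq.le hq1' hpq)
  · obtain rfl : q = 1 := le_antisymm hq1 (not_lt.1 hq1')
    exact log_le_log (by positivity) (inv_sqrt_le_div_sub hs1 hp.le (by linarith))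

lemma riskThreshold_one {r q : ℝ} (hq1 : q < 1) (hqr : q < 1 / r) :
    riskThreshold r 1 q = log ((1 - q) / (1 / r - q)) / 2 := by
  have h1 : 0 < 1 - q := by linarith
  have h2 : 0 < 1 / r - q := by linarith
  have hratio : 2 * 1 * (1 - q) / (√((1 - 1) ^ 2 + 4 * 1 * (1 - q) * (1 / r - 1 * q)) - (1 - 1))
      = √((1 - q) / (1 / r - q)) := by
    have hX : 0 < (1 - q) * (1 / r - q) := mul_pos h1 h2
    rw [show (1 - 1 : ℝ) ^ 2 + 4 * 1 * (1 - q) * (1 / r - 1 * q) = 4 * ((1 - q) * (1 / r - q)) by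
        ring,
      sub_self, sub_zero, eq_comm,
      sqrt_eq_iff_mul_self_eq_of_pos (div_pos (by linarith) (sqrt_pos.2 (by positivity))),
      div_mul_div_comm, mul_self_sqrt (by positivity)]
    field_simp
    ring
  rw [riskThreshold, if_pos hq1, hratio, log_sqrt (by positivity)]

lemma tendsto_riskThreshold_one {r : ℝ} (hr : 0 < r) :
    Tendsto (riskThreshold r 1) (𝓝 0) (𝓝 (1 / 2 * log r)) := by
  have hcont : ContinuousAt (fun q : ℝ ↦ log ((1 - q) / (1 / r - q)) / 2) 0 := by
    fun_prop (disch := simp [hr.ne'])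
  have hval : log ((1 - 0) / (1 / r - 0)) / 2 = 1 / 2 * log r := by
    simp only [sub_zero, one_div_one_div]
    ring
  rw [← hval]
  refine hcont.tendsto.congr' ?_
  filter_upwards [eventually_lt_nhds one_pos, eventually_lt_nhds (one_div_pos.2 hr)] with q hq1 hqr
  exact (riskThreshold_one hq1 hqr).symm

theorem stmt_13 (r : ℝ) (hr : 1 < r) :
    sInf {x : ℝ | ∃ p q : ℝ, 0 < p ∧ p ≤ 1 ∧ 0 < q ∧ q ≤ 1 ∧ p * q < 1 / r ∧
      x = if q < 1 then
            Real.log (2 * p * (1 - q) /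
              (Real.sqrt ((1 - p) ^ 2 + 4 * p * (1 - q) * (1 / r - p * q)) - (1 - p)))
          else
            Real.log ((1 - p) / (1 / r - p))} = (1 / 2) * Real.log r := by
  set S := {x : ℝ | ∃ p q : ℝ, 0 < p ∧ p ≤ 1 ∧ 0 < q ∧ q ≤ 1 ∧ p * q < 1 / r ∧
    x = riskThreshold r p q}
  show sInf S = _
  have hr0 : 0 < r := zero_lt_one.trans hr
  have hlower : 1 / 2 * log r ∈ lowerBounds S := by
    rintro _ ⟨p, q, hp, hp1, hq, hq1, hpq, rfl⟩
    exact half_log_le_riskThreshold hr.le hp hp1 hq hq1 hpq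
  have hmem : ∀ᶠ q in 𝓝[>] 0, riskThreshold r 1 q ∈ S := by
    filter_upwards [self_mem_nhdsWithin,
      nhdsWithin_le_nhds (eventually_lt_nhds (one_div_pos.2 hr0))] with q hq hqr
    have hr1 : 1 / r < 1 := (div_lt_one hr0).2 hr
    exact ⟨1, q, one_pos, le_rfl, hq, by linarith, by rwa [one_mul], rfl⟩
  have hT := (tendsto_riskThreshold_one hr0).mono_left (nhdsWithin_le_nhds (s := Set.Ioi 0))
  exact (isGLB_of_mem_closure hlower (mem_closure_of_tendsto hT hmem)).csInf_eq
    (hmem.exists.elim fun _ h ↦ ⟨_, h⟩)
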